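/- Let μ be a finite positive Borel measure on [0,∞), let z_i and z_j be points of the open upper half-plane ℂ⁺ = {z ∈ ℂ : Im z > 0}, and let u_i, u_j, v_i, v_j ∈ ℂ satisfy (∫_{[0,∞)} (t − z_i)⁻¹ dμ(t))·u_i = v_i and (∫_{[0,∞)} (t − z_j)⁻¹ dμ(t))·u_j = v_j. Then conj(u_i)·v_j − conj(v_i)·u_j = (z_j − conj(z_i)) · ∫_{[0,∞)} conj(u_i)·u_j / ((t − z_j)·(t − conj(z_i))) dμ(t). -/

import Mathlib

open MeasureTheory ComplexConjugate

/-!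
With F(z) = ∫ (t - z)⁻¹ dμ(t), the left side equals conj(u_i) u_j (F(z_j) - conj F(z_i)), and
conj F(z_i) = F(conj z_i). Integrating the resolvent identity
(t - z)⁻¹ - (t - w)⁻¹ = (z - w) / ((t - z)(t - w)) against the finite measure μ gives
F(z_j) - F(conj z_i) = (z_j - conj z_i) ∫ dμ(t) / ((t - z_j)(t - conj z_i)).
-/

namespace Complex

lemma ofReal_sub_ne_zero {z : ℂ} (hz : z.im ≠ 0) (t : ℝ) : (t : ℂ) - z ≠ 0 := by
  intro h
  apply hz
  simpa using (congrArg im (sub_eq_zero.mp h)).symm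

lemma norm_inv_ofReal_sub_le {z : ℂ} (hz : z.im ≠ 0) (t : ℝ) :
    ‖((t : ℂ) - z)⁻¹‖ ≤ |z.im|⁻¹ := by
  rw [norm_inv]
  refine inv_anti₀ (abs_pos.2 hz) ?_
  simpa using abs_im_le_norm ((t : ℂ) - z)

lemma integrable_inv_ofReal_sub (μ : Measure ℝ) [IsFiniteMeasure μ] {z : ℂ} (hz : z.im ≠ 0) :
    Integrable (fun t : ℝ => ((t : ℂ) - z)⁻¹) μ := by
  have hcont : Continuous fun t : ℝ => ((t : ℂ) - z)⁻¹ :=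
    (continuous_ofReal.sub continuous_const).inv₀ (ofReal_sub_ne_zero hz)
  exact Integrable.of_bound hcont.aestronglyMeasurable _
    (Filter.Eventually.of_forall (norm_inv_ofReal_sub_le hz))

lemma conj_integral_inv_ofReal_sub (μ : Measure ℝ) (z : ℂ) :
    conj (∫ t : ℝ, ((t : ℂ) - z)⁻¹ ∂μ) = ∫ t : ℝ, ((t : ℂ) - conj z)⁻¹ ∂μ := by
  rw [← integral_conj]
  simp only [map_inv₀, map_sub, conj_ofReal]

lemma integral_inv_ofReal_sub_sub_integral_inv_ofReal_sub (μ : Measure ℝ) [IsFiniteMeasure μ]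
    {z w : ℂ} (hz : z.im ≠ 0) (hw : w.im ≠ 0) :
    (∫ t : ℝ, ((t : ℂ) - z)⁻¹ ∂μ) - ∫ t : ℝ, ((t : ℂ) - w)⁻¹ ∂μ =
      (z - w) * ∫ t : ℝ, (((t : ℂ) - z) * ((t : ℂ) - w))⁻¹ ∂μ := by
  rw [← integral_sub (integrable_inv_ofReal_sub μ hz) (integrable_inv_ofReal_sub μ hw),
    ← integral_const_mul]
  congr 1 with t
  rw [inv_sub_inv (ofReal_sub_ne_zero hz t) (ofReal_sub_ne_zero hw t), div_eq_mul_inv]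
  ring

end Complex

theorem stmt2_general (μ : Measure ℝ) [IsFiniteMeasure μ]
    (zi zj : ℂ) (hzi : 0 < zi.im) (hzj : 0 < zj.im)
    (ui uj vi vj : ℂ)
    (hi : (∫ t : ℝ, ((t : ℂ) - zi)⁻¹ ∂μ) * ui = vi)
    (hj : (∫ t : ℝ, ((t : ℂ) - zj)⁻¹ ∂μ) * uj = vj) :
    (starRingEnd ℂ) ui * vj - (starRingEnd ℂ) vi * uj =
      (zj - (starRingEnd ℂ) zi) *
        ∫ t : ℝ, (starRingEnd ℂ) ui * uj /
          ((((t : ℂ) - zj)) * (((t : ℂ) - (starRingEnd ℂ) zi))) ∂μ := by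
  have hconj_zi : (conj zi).im ≠ 0 := by simpa using hzi.ne'
  have resolvent :=
    Complex.integral_inv_ofReal_sub_sub_integral_inv_ofReal_sub μ hzj.ne' hconj_zi
  rw [← hi, ← hj, map_mul, Complex.conj_integral_inv_ofReal_sub]
  simp_rw [div_eq_mul_inv, integral_const_mul]
  linear_combination conj ui * uj * resolvent

/-- the key integral identity behind the positivity of S₁. -/
theorem stmt2 (μ : Measure ℝ) [IsFiniteMeasure μ] (hμ : μ (Set.Iio 0) = 0)
    (zi zj : ℂ) (hzi : 0 < zi.im) (hzj : 0 < zj.im)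
    (ui uj vi vj : ℂ)
    (hi : (∫ t : ℝ, ((t : ℂ) - zi)⁻¹ ∂μ) * ui = vi)
    (hj : (∫ t : ℝ, ((t : ℂ) - zj)⁻¹ ∂μ) * uj = vj) :
    (starRingEnd ℂ) ui * vj - (starRingEnd ℂ) vi * uj =
      (zj - (starRingEnd ℂ) zi) *
        ∫ t : ℝ, (starRingEnd ℂ) ui * uj /
          ((((t : ℂ) - zj)) * (((t : ℂ) - (starRingEnd ℂ) zi))) ∂μ :=
  stmt2_general μ zi zj hzi hzj ui uj vi vj hi hj
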